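/- Let Δ be a base of a root system spanning a Euclidean space with Weyl-invariant inner product, let α ∈ Δ and I ⊂ Δ∖{α} be such that (w_α, w_β) > 0 for at least one β ∈ Δ∖(I∪{α}). Suppose (a_n) is a sequence in 𝔞_I = ∩_{β∈I} ker β ⊂ E* with β(a_n) → ∞ for all β ∈ Δ∖(I∪{α}), w̄_α(a_n) ≥ w̄_β(a_n) for all β ∈ Δ∖I, and w̄_α(a_n) ≥ 0 for all n. Then α(a_n) → ∞. -/

import Mathlib

/-!
Write `w̄_δ(f) = d_δ⁻¹ f(w_δ)`. Distinct simple roots make obtuse angles, so a vector making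
acute angles with all of `Δ` has nonnegative coordinates; in particular the dual weights have a
nonnegative Gram matrix and `d > 0`. Since `∑_δ (γ, δ) d_δ = 1`, at a simple root `γ` maximising
`w̄_γ(f)` we get `γ(f) = ∑_δ (γ, δ) d_δ w̄_δ(f) ≥ w̄_γ(f)`, and the maximality hypotheses make `α`
such a maximiser, so `α(a_n) ≥ w̄_α(a_n)`. Expanding `a_n(w_α)` in the basis `Δ` then gives
`(d_α - (w_α, w_α)) α(a_n) ≥ (w_α, w_β) β(a_n) → ∞` for the `β` with `(w_α, w_β) > 0`,
and `d_α - (w_α, w_α) ≥ (w_α, w_β) > 0`.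
-/

open Finset
open scoped RealInnerProductSpace

/-- `Δ` is a base (set of simple roots) of a (reduced, crystallographic) root system `Φ`
spanning the Euclidean space `E`.  Since the reflections used here are the orthogonal
reflections with respect to the inner product, the inner product is automatically
invariant under the Weyl group. -/
structure IsRootSystemBase {E : Type*} [NormedAddCommGroup E] [InnerProductSpace ℝ E]
    [FiniteDimensional ℝ E] (Φ : Set E) (Δ : Finset E) : Prop where
  subset : (Δ : Set E) ⊆ Φ
  span_top : Submodule.span ℝ (Δ : Set E) = ⊤
  indep : LinearIndependent ℝ (fun α : Δ => (α : E))
  ne_zero : ∀ α ∈ Φ, α ≠ (0 : E)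
  reflect_mem : ∀ α ∈ Φ, ∀ β ∈ Φ, β - (2 * ⟪α, β⟫ / ⟪α, α⟫) • α ∈ Φ
  crystallographic : ∀ α ∈ Φ, ∀ β ∈ Φ, ∃ n : ℤ, 2 * ⟪α, β⟫ / ⟪α, α⟫ = (n : ℝ)
  pos_or_neg : ∀ x ∈ Φ,
      (∃ c : E → ℝ, (∀ β ∈ Δ, 0 ≤ c β) ∧ x = ∑ β ∈ Δ, c β • β) ∨
      (∃ c : E → ℝ, (∀ β ∈ Δ, 0 ≤ c β) ∧ x = -∑ β ∈ Δ, c β • β)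

/-- The root system `Φ` with base `Δ` is irreducible: `Δ` cannot be split into two
nonempty mutually orthogonal pieces. -/
def IsIrreducibleBase {E : Type*} [NormedAddCommGroup E] [InnerProductSpace ℝ E] [DecidableEq E]
    (Δ : Finset E) : Prop :=
  ∀ s ⊆ Δ, s.Nonempty → s ≠ Δ → ∃ α ∈ s, ∃ β ∈ Δ \ s, ⟪α, β⟫ ≠ (0 : ℝ)

section DualFamily

variable {E : Type*} [NormedAddCommGroup E] [InnerProductSpace ℝ E] [DecidableEq E]
  {Δ : Finset E} {w : E → E}

theorem inner_dual_sum_smul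
    (hw : ∀ α ∈ Δ, ∀ β ∈ Δ, ⟪w α, β⟫ = if α = β then (1 : ℝ) else 0)
    {s : Finset E} (hs : s ⊆ Δ) {γ : E} (hγ : γ ∈ s) (c : E → ℝ) :
    ⟪w γ, ∑ δ ∈ s, c δ • δ⟫ = c γ := by
  simp only [inner_sum, real_inner_smul_right]
  rw [Finset.sum_congr rfl fun δ hδ => by rw [hw γ (hs hγ) δ (hs hδ)]]
  simp [hγ]

theorem sum_inner_dual_smul_eq
    (hspan : Submodule.span ℝ (Δ : Set E) = ⊤)
    (hw : ∀ α ∈ Δ, ∀ β ∈ Δ, ⟪w α, β⟫ = if α = β then (1 : ℝ) else 0) (x : E) :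
    ∑ δ ∈ Δ, ⟪w δ, x⟫ • δ = x := by
  have hid : ∑ δ ∈ Δ, (innerₗ E (w δ)).smulRight δ = LinearMap.id := by
    refine LinearMap.ext_on hspan fun β hβ => ?_
    simp only [LinearMap.coe_sum, LinearMap.coe_smulRight, innerₗ_apply_apply, Finset.sum_apply,
      LinearMap.id_apply]
    rw [Finset.sum_congr rfl fun δ hδ => by rw [hw δ hδ β hβ]]
    simp [Finset.mem_coe.mp hβ]
  simpa using LinearMap.congr_fun hid x

theorem sum_inner_smul_dual_eq
    (hspan : Submodule.span ℝ (Δ : Set E) = ⊤)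
    (hw : ∀ α ∈ Δ, ∀ β ∈ Δ, ⟪w α, β⟫ = if α = β then (1 : ℝ) else 0) (x : E) :
    ∑ δ ∈ Δ, ⟪x, δ⟫ • w δ = x := by
  refine ext_inner_right ℝ fun y => ?_
  conv_rhs => rw [← sum_inner_dual_smul_eq hspan hw y]
  simp only [sum_inner, inner_sum, real_inner_smul_left, real_inner_smul_right]
  exact Finset.sum_congr rfl fun δ _ => by ring

end DualFamily

section ObtuseBasis

variable {E : Type*} [NormedAddCommGroup E] [InnerProductSpace ℝ E] [DecidableEq E]
  {Δ : Finset E} {w : E → E}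

theorem inner_dual_nonneg_of_forall_inner_nonneg
    (hspan : Submodule.span ℝ (Δ : Set E) = ⊤)
    (hw : ∀ α ∈ Δ, ∀ β ∈ Δ, ⟪w α, β⟫ = if α = β then (1 : ℝ) else 0)
    (hobtuse : ∀ β ∈ Δ, ∀ γ ∈ Δ, β ≠ γ → ⟪β, γ⟫ ≤ 0)
    {x : E} (hx : ∀ δ ∈ Δ, 0 ≤ ⟪x, δ⟫) {γ : E} (hγ : γ ∈ Δ) : 0 ≤ ⟪w γ, x⟫ := by
  set r : E → ℝ := fun δ => ⟪w δ, x⟫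
  set N := Δ.filter (r · < 0)
  set u := ∑ δ ∈ Δ.filter (¬r · < 0), r δ • δ
  set v := ∑ δ ∈ N, r δ • δ
  -- `v` is the negative part of `x`; the two parts of `x` make an acute angle.
  have hx_eq : u + v = x := by
    rw [add_comm, Finset.sum_filter_add_sum_filter_not, sum_inner_dual_smul_eq hspan hw]
  have hxv : ⟪x, v⟫ ≤ 0 := by
    rw [inner_sum]
    refine Finset.sum_nonpos fun δ hδ => ?_
    rw [Finset.mem_filter] at hδ
    rw [real_inner_smul_right]
    exact mul_nonpos_of_nonpos_of_nonneg hδ.2.le (hx δ hδ.1)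
  have huv : 0 ≤ ⟪u, v⟫ := by
    rw [sum_inner]
    refine Finset.sum_nonneg fun δ hδ => ?_
    rw [inner_sum]
    refine Finset.sum_nonneg fun ε hε => ?_
    rw [Finset.mem_filter] at hδ hε
    rw [real_inner_smul_left, real_inner_smul_right, ← mul_assoc]
    have hne : δ ≠ ε := fun h => hδ.2 (h ▸ hε.2)
    exact mul_nonneg_of_nonpos_of_nonpos
      (mul_nonpos_of_nonneg_of_nonpos (not_lt.mp hδ.2) hε.2.le) (hobtuse δ hδ.1 ε hε.1 hne)
  have hv : v = 0 := by
    rw [← real_inner_self_nonpos]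
    have : ⟪x, v⟫ = ⟪u, v⟫ + ⟪v, v⟫ := by rw [← hx_eq, inner_add_left]
    linarith
  by_contra! hneg
  have hγN : γ ∈ N := Finset.mem_filter.mpr ⟨hγ, hneg⟩
  have : ⟪w γ, v⟫ = r γ := inner_dual_sum_smul hw (Finset.filter_subset _ _) hγN r
  rw [hv, inner_zero_right] at this
  exact hneg.ne this.symm

theorem inner_dual_dual_nonneg
    (hspan : Submodule.span ℝ (Δ : Set E) = ⊤)
    (hw : ∀ α ∈ Δ, ∀ β ∈ Δ, ⟪w α, β⟫ = if α = β then (1 : ℝ) else 0)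
    (hobtuse : ∀ β ∈ Δ, ∀ γ ∈ Δ, β ≠ γ → ⟪β, γ⟫ ≤ 0)
    {β γ : E} (hβ : β ∈ Δ) (hγ : γ ∈ Δ) : 0 ≤ ⟪w β, w γ⟫ :=
  inner_dual_nonneg_of_forall_inner_nonneg hspan hw hobtuse
    (fun δ hδ => by rw [hw γ hγ δ hδ]; positivity) hβ

end ObtuseBasis

namespace IsRootSystemBase

variable {E : Type*} [NormedAddCommGroup E] [InnerProductSpace ℝ E] [FiniteDimensional ℝ E]
  {Φ : Set E} {Δ : Finset E} {w : E → E}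

theorem sub_mem_of_inner_lt (hbase : IsRootSystemBase Φ Δ) {β γ : E} (hβ : β ∈ Φ)
    (hγ : γ ∈ Φ) (hpos : 0 < ⟪β, γ⟫) (hlt : ⟪β, γ⟫ < ⟪β, β⟫) : γ - β ∈ Φ := by
  obtain ⟨n, hn⟩ := hbase.crystallographic β hβ γ hγ
  have hββ : 0 < ⟪β, β⟫ := hpos.trans hlt
  have hn_pos : (0 : ℝ) < n := hn ▸ by positivity
  have hn_lt : (n : ℝ) < 2 := hn ▸ by rw [div_lt_iff₀ hββ]; linarith
  have hn_one : n = 1 := by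
    have : 0 < n := by exact_mod_cast hn_pos
    have : n < 2 := by exact_mod_cast hn_lt
    omega
  have := hbase.reflect_mem β hβ γ hγ
  rwa [hn, hn_one, Int.cast_one, one_smul] at this

variable [DecidableEq E]

theorem sub_notMem (hbase : IsRootSystemBase Φ Δ)
    (hw : ∀ α ∈ Δ, ∀ β ∈ Δ, ⟪w α, β⟫ = if α = β then (1 : ℝ) else 0)
    {β γ : E} (hβ : β ∈ Δ) (hγ : γ ∈ Δ) (hne : β ≠ γ) : β - γ ∉ Φ := by
  intro hmem
  -- The coordinates `⟪w γ, β - γ⟫ = -1` and `⟪w β, β - γ⟫ = 1` have opposite signs.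
  rcases hbase.pos_or_neg _ hmem with ⟨c, hc, hsum⟩ | ⟨c, hc, hsum⟩
  · have hcoord := inner_dual_sum_smul hw subset_rfl hγ c
    rw [← hsum, inner_sub_right, hw γ hγ β hβ, hw γ hγ γ hγ, if_neg hne.symm, if_pos rfl] at hcoord
    linarith [hc γ hγ]
  · have hcoord := inner_dual_sum_smul hw subset_rfl hβ c
    rw [← neg_eq_iff_eq_neg.mpr hsum, inner_neg_right, inner_sub_right, hw β hβ β hβ,
      hw β hβ γ hγ, if_pos rfl, if_neg hne] at hcoord
    linarith [hc β hβ]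

theorem inner_nonpos_of_ne (hbase : IsRootSystemBase Φ Δ)
    (hw : ∀ α ∈ Δ, ∀ β ∈ Δ, ⟪w α, β⟫ = if α = β then (1 : ℝ) else 0) :
    ∀ β ∈ Δ, ∀ γ ∈ Δ, β ≠ γ → ⟪β, γ⟫ ≤ 0 := by
  intro β hβ γ hγ hne
  by_contra! hpos
  have hβΦ := hbase.subset hβ
  have hγΦ := hbase.subset hγ
  have hββ : ⟪β, β⟫ ≤ ⟪β, γ⟫ := not_lt.mp fun hlt =>
    hbase.sub_notMem hw hγ hβ hne.symm (hbase.sub_mem_of_inner_lt hβΦ hγΦ hpos hlt)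
  have hγγ : ⟪γ, γ⟫ ≤ ⟪β, γ⟫ := not_lt.mp fun hlt =>
    hbase.sub_notMem hw hβ hγ hne
      (hbase.sub_mem_of_inner_lt hγΦ hβΦ (real_inner_comm β γ ▸ hpos) (real_inner_comm β γ ▸ hlt))
  have : β - γ = 0 := by
    rw [← real_inner_self_nonpos, inner_sub_sub_self, real_inner_comm β γ]
    linarith
  exact hne (sub_eq_zero.mp this)

end IsRootSystemBase

section Weights

variable {E : Type*} [NormedAddCommGroup E] [InnerProductSpace ℝ E] [DecidableEq E]
  {Δ : Finset E} {w : E → E} {d : E → ℝ}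

theorem apply_eq_sum_inner_dual_mul
    (hspan : Submodule.span ℝ (Δ : Set E) = ⊤)
    (hw : ∀ α ∈ Δ, ∀ β ∈ Δ, ⟪w α, β⟫ = if α = β then (1 : ℝ) else 0)
    (f : Module.Dual ℝ E) (x : E) : f x = ∑ δ ∈ Δ, ⟪w δ, x⟫ * f δ := by
  conv_lhs => rw [← sum_inner_dual_smul_eq hspan hw x]
  simp only [map_sum, map_smul, smul_eq_mul]

theorem apply_eq_sum_inner_mul_apply_dual
    (hspan : Submodule.span ℝ (Δ : Set E) = ⊤)
    (hw : ∀ α ∈ Δ, ∀ β ∈ Δ, ⟪w α, β⟫ = if α = β then (1 : ℝ) else 0)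
    (f : Module.Dual ℝ E) (x : E) : f x = ∑ δ ∈ Δ, ⟪x, δ⟫ * f (w δ) := by
  conv_lhs => rw [← sum_inner_smul_dual_eq hspan hw x]
  simp only [map_sum, map_smul, smul_eq_mul]

theorem pos_of_eq_sum_inner_dual
    (hspan : Submodule.span ℝ (Δ : Set E) = ⊤)
    (hw : ∀ α ∈ Δ, ∀ β ∈ Δ, ⟪w α, β⟫ = if α = β then (1 : ℝ) else 0)
    (hobtuse : ∀ β ∈ Δ, ∀ γ ∈ Δ, β ≠ γ → ⟪β, γ⟫ ≤ 0)
    (hd : ∀ γ ∈ Δ, d γ = ∑ β ∈ Δ, ⟪w γ, w β⟫) {γ : E} (hγ : γ ∈ Δ) : 0 < d γ := by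
  have hwγ : w γ ≠ 0 := fun h => by simpa [h] using hw γ hγ γ hγ
  rw [hd γ hγ]
  calc 0 < ⟪w γ, w γ⟫ := real_inner_self_pos.mpr hwγ
    _ ≤ ∑ β ∈ Δ, ⟪w γ, w β⟫ :=
      Finset.single_le_sum (fun β hβ => inner_dual_dual_nonneg hspan hw hobtuse hγ hβ) hγ

theorem sum_inner_mul_eq_one
    (hspan : Submodule.span ℝ (Δ : Set E) = ⊤)
    (hw : ∀ α ∈ Δ, ∀ β ∈ Δ, ⟪w α, β⟫ = if α = β then (1 : ℝ) else 0)
    (hd : ∀ γ ∈ Δ, d γ = ∑ β ∈ Δ, ⟪w γ, w β⟫) {γ : E} (hγ : γ ∈ Δ) :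
    ∑ δ ∈ Δ, ⟪γ, δ⟫ * d δ = 1 := by
  -- `d δ` is the coordinate `⟪w δ, ρ⟫` of `ρ = ∑ β, w β`, and `⟪γ, ρ⟫ = 1`.
  calc ∑ δ ∈ Δ, ⟪γ, δ⟫ * d δ = innerₗ E (∑ β ∈ Δ, w β) γ := by
        rw [apply_eq_sum_inner_mul_apply_dual hspan hw _ γ]
        refine Finset.sum_congr rfl fun δ hδ => ?_
        rw [hd δ hδ, innerₗ_apply_apply, real_inner_comm (w δ), inner_sum]
    _ = 1 := by
        rw [innerₗ_apply_apply, sum_inner, Finset.sum_congr rfl fun β hβ => hw β hβ γ hγ]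
        simp [hγ]

theorem inv_mul_apply_dual_le_apply_of_forall_le
    (hspan : Submodule.span ℝ (Δ : Set E) = ⊤)
    (hw : ∀ α ∈ Δ, ∀ β ∈ Δ, ⟪w α, β⟫ = if α = β then (1 : ℝ) else 0)
    (hobtuse : ∀ β ∈ Δ, ∀ γ ∈ Δ, β ≠ γ → ⟪β, γ⟫ ≤ 0)
    (hd : ∀ γ ∈ Δ, d γ = ∑ β ∈ Δ, ⟪w γ, w β⟫) (f : Module.Dual ℝ E) {γ : E} (hγ : γ ∈ Δ)
    (hmax : ∀ δ ∈ Δ, (d δ)⁻¹ * f (w δ) ≤ (d γ)⁻¹ * f (w γ)) :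
    (d γ)⁻¹ * f (w γ) ≤ f γ := by
  set z : E → ℝ := fun δ => (d δ)⁻¹ * f (w δ)
  calc z γ = ∑ δ ∈ Δ, ⟪γ, δ⟫ * d δ * z γ := by
        rw [← Finset.sum_mul, sum_inner_mul_eq_one hspan hw hd hγ, one_mul]
    _ ≤ ∑ δ ∈ Δ, ⟪γ, δ⟫ * d δ * z δ := by
        refine Finset.sum_le_sum fun δ hδ => ?_
        rcases eq_or_ne γ δ with rfl | hne
        · rfl
        exact mul_le_mul_of_nonpos_left (hmax δ hδ) (mul_nonpos_of_nonpos_of_nonneg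
          (hobtuse γ hγ δ hδ hne) (pos_of_eq_sum_inner_dual hspan hw hobtuse hd hδ).le)
    _ = f γ := by
        rw [apply_eq_sum_inner_mul_apply_dual hspan hw f γ]
        refine Finset.sum_congr rfl fun δ hδ => ?_
        rw [mul_assoc, mul_inv_cancel_left₀ (pos_of_eq_sum_inner_dual hspan hw hobtuse hd hδ).ne']

theorem inv_mul_apply_dual_le_apply
    (hspan : Submodule.span ℝ (Δ : Set E) = ⊤)
    (hw : ∀ α ∈ Δ, ∀ β ∈ Δ, ⟪w α, β⟫ = if α = β then (1 : ℝ) else 0)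
    (hobtuse : ∀ β ∈ Δ, ∀ γ ∈ Δ, β ≠ γ → ⟪β, γ⟫ ≤ 0)
    (hd : ∀ γ ∈ Δ, d γ = ∑ β ∈ Δ, ⟪w γ, w β⟫) (f : Module.Dual ℝ E) {α : E} (hα : α ∈ Δ)
    {I : Finset E} (hf : ∀ β ∈ I, f β = 0)
    (hmax : ∀ β ∈ Δ \ I, (d β)⁻¹ * f (w β) ≤ (d α)⁻¹ * f (w α))
    (hnonneg : 0 ≤ (d α)⁻¹ * f (w α)) :
    (d α)⁻¹ * f (w α) ≤ f α := by
  -- `α` is a maximiser: a maximiser `γ ∈ I` would give `w̄_γ(f) ≤ γ(f) = 0 ≤ w̄_α(f)`.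
  refine inv_mul_apply_dual_le_apply_of_forall_le hspan hw hobtuse hd f hα fun δ hδ => ?_
  obtain ⟨γ, hγ, hγmax⟩ := Δ.exists_max_image (fun δ => (d δ)⁻¹ * f (w δ)) ⟨α, hα⟩
  refine (hγmax δ hδ).trans ?_
  by_cases hγI : γ ∈ I
  · calc (d γ)⁻¹ * f (w γ) ≤ f γ :=
          inv_mul_apply_dual_le_apply_of_forall_le hspan hw hobtuse hd f hγ hγmax
      _ = 0 := hf γ hγI
      _ ≤ (d α)⁻¹ * f (w α) := hnonneg
  · exact hmax γ (Finset.mem_sdiff.mpr ⟨hγ, hγI⟩)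

theorem inner_dual_add_inner_dual_le (hspan : Submodule.span ℝ (Δ : Set E) = ⊤)
    (hw : ∀ α ∈ Δ, ∀ β ∈ Δ, ⟪w α, β⟫ = if α = β then (1 : ℝ) else 0)
    (hobtuse : ∀ β ∈ Δ, ∀ γ ∈ Δ, β ≠ γ → ⟪β, γ⟫ ≤ 0)
    (hd : ∀ γ ∈ Δ, d γ = ∑ β ∈ Δ, ⟪w γ, w β⟫) {α β : E} (hα : α ∈ Δ) (hβ : β ∈ Δ.erase α) :
    ⟪w α, w α⟫ + ⟪w α, w β⟫ ≤ d α := by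
  obtain ⟨hβα, hβΔ⟩ := Finset.mem_erase.mp hβ
  rw [hd α hα, ← Finset.sum_pair (f := fun δ => ⟪w α, w δ⟫) hβα.symm]
  exact Finset.sum_le_sum_of_subset_of_nonneg
    (Finset.insert_subset hα (Finset.singleton_subset_iff.mpr hβΔ))
    fun δ hδ _ => inner_dual_dual_nonneg hspan hw hobtuse hα hδ

theorem inner_dual_mul_apply_le
    (hspan : Submodule.span ℝ (Δ : Set E) = ⊤)
    (hw : ∀ α ∈ Δ, ∀ β ∈ Δ, ⟪w α, β⟫ = if α = β then (1 : ℝ) else 0)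
    (hobtuse : ∀ β ∈ Δ, ∀ γ ∈ Δ, β ≠ γ → ⟪β, γ⟫ ≤ 0)
    (hd : ∀ γ ∈ Δ, d γ = ∑ β ∈ Δ, ⟪w γ, w β⟫) (f : Module.Dual ℝ E) {α β : E} (hα : α ∈ Δ)
    (hβ : β ∈ Δ.erase α) (hf : ∀ δ ∈ Δ.erase α, 0 ≤ f δ) (hle : (d α)⁻¹ * f (w α) ≤ f α) :
    ⟪w α, w β⟫ * f β ≤ (d α - ⟪w α, w α⟫) * f α := by
  have hexpand : f (w α) = ⟪w α, w α⟫ * f α + ∑ δ ∈ Δ.erase α, ⟪w α, w δ⟫ * f δ := by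
    rw [Finset.add_sum_erase Δ (fun δ => ⟪w α, w δ⟫ * f δ) hα,
      apply_eq_sum_inner_dual_mul hspan hw f (w α)]
    simp only [real_inner_comm]
  have hsingle : ⟪w α, w β⟫ * f β ≤ ∑ δ ∈ Δ.erase α, ⟪w α, w δ⟫ * f δ :=
    Finset.single_le_sum (f := fun δ => ⟪w α, w δ⟫ * f δ) (fun δ hδ =>
      mul_nonneg (inner_dual_dual_nonneg hspan hw hobtuse hα (Finset.mem_of_mem_erase hδ))
        (hf δ hδ)) hβ
  have hdα := pos_of_eq_sum_inner_dual hspan hw hobtuse hd hα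
  have : f (w α) ≤ d α * f α := (inv_mul_le_iff₀ hdα).mp hle
  linarith

end Weights

open Filter in
theorem root_tendsto_atTop_general
    {E : Type*} [NormedAddCommGroup E] [InnerProductSpace ℝ E] [FiniteDimensional ℝ E]
    [DecidableEq E] (Φ : Set E) (Δ : Finset E) (hbase : IsRootSystemBase Φ Δ)
    (w : E → E) (hw : ∀ α ∈ Δ, ∀ β ∈ Δ, ⟪w α, β⟫ = if α = β then (1 : ℝ) else 0)
    (d : E → ℝ) (hd : ∀ γ ∈ Δ, d γ = ∑ β ∈ Δ, ⟪w γ, w β⟫)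
    (α : E) (hα : α ∈ Δ) (I : Finset E)
    (hconn : ∃ β ∈ Δ \ insert α I, 0 < ⟪w α, w β⟫)
    (a : ℕ → Module.Dual ℝ E)
    (ha : ∀ n, ∀ β ∈ I, a n β = 0)
    (htend : ∀ β ∈ Δ \ insert α I, Tendsto (fun n => a n β) atTop atTop)
    (hmax : ∀ n, ∀ β ∈ Δ \ I, (d α)⁻¹ * a n (w α) ≥ (d β)⁻¹ * a n (w β))
    (hnonneg : ∀ n, (d α)⁻¹ * a n (w α) ≥ 0) :
    Tendsto (fun n => a n α) atTop atTop := by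
  obtain ⟨β, hβ, hpos⟩ := hconn
  have hspan := hbase.span_top
  have hobtuse := hbase.inner_nonpos_of_ne hw
  have hβα : β ∈ Δ.erase α := by
    simp only [Finset.mem_sdiff, Finset.mem_insert, not_or] at hβ
    exact Finset.mem_erase.mpr ⟨hβ.2.1, hβ.1⟩
  have hgap : 0 < d α - ⟪w α, w α⟫ := by
    linarith [inner_dual_add_inner_dual_le hspan hw hobtuse hd hα hβα]
  have hev : ∀ᶠ n in atTop, ∀ δ ∈ Δ.erase α, 0 ≤ a n δ := by
    filter_upwards [(eventually_all_finset _).mpr fun δ hδ => (htend δ hδ).eventually_ge_atTop 0]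
      with n hn δ hδ
    by_cases hδI : δ ∈ I
    · exact (ha n δ hδI).ge
    · obtain ⟨hδα, hδΔ⟩ := Finset.mem_erase.mp hδ
      exact hn δ (by simp [hδΔ, hδα, hδI])
  refine tendsto_atTop_mono' atTop ?_ ((htend β hβ).const_mul_atTop (div_pos hpos hgap))
  filter_upwards [hev] with n hn
  have hlow := inv_mul_apply_dual_le_apply hspan hw hobtuse hd (a n) hα (ha n) (hmax n) (hnonneg n)
  rw [div_mul_eq_mul_div, div_le_iff₀ hgap]
  linarith [inner_dual_mul_apply_le hspan hw hobtuse hd (a n) hα hβα hn hlow]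

open Filter in
/-- Corollary of the appendix (Li): under the connectedness assumption (encoded by
`(w_α, w_β) > 0` for some `β ∈ Δ∖(I∪{α})`), if `β(a_n) → ∞` for all
`β ∈ Δ∖(I∪{α})` and the maximality conditions hold, then `α(a_n) → ∞`. -/
theorem root_tendsto_atTop
    {E : Type*} [NormedAddCommGroup E] [InnerProductSpace ℝ E] [FiniteDimensional ℝ E]
    [DecidableEq E] (Φ : Set E) (Δ : Finset E) (hbase : IsRootSystemBase Φ Δ)
    (w : E → E) (hw : ∀ α ∈ Δ, ∀ β ∈ Δ, ⟪w α, β⟫ = if α = β then (1 : ℝ) else 0)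
    (d : E → ℝ) (hd : ∀ γ ∈ Δ, d γ = ∑ β ∈ Δ, ⟪w γ, w β⟫)
    (α : E) (hα : α ∈ Δ) (I : Finset E) (hI : I ⊆ Δ.erase α)
    (hconn : ∃ β ∈ Δ \ insert α I, 0 < ⟪w α, w β⟫)
    (a : ℕ → Module.Dual ℝ E)
    (ha : ∀ n, ∀ β ∈ I, a n β = 0)
    (htend : ∀ β ∈ Δ \ insert α I, Tendsto (fun n => a n β) atTop atTop)
    (hmax : ∀ n, ∀ β ∈ Δ \ I, (d α)⁻¹ * a n (w α) ≥ (d β)⁻¹ * a n (w β))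
    (hnonneg : ∀ n, (d α)⁻¹ * a n (w α) ≥ 0) :
    Tendsto (fun n => a n α) atTop atTop :=
  root_tendsto_atTop_general Φ Δ hbase w hw d hd α hα I hconn a ha htend hmax hnonneg
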